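/- arXiv:1902.10689 — 2 statements merged into one kernel-verified Lean document; each statement's English description precedes it below -/
import Mathlib

section
/- Let G be a finite nested group with chain of centers G = X_0 > X_1 > ⋯ > X_n ≥ 1. Then for every i with 1 ≤ i ≤ n, one has the strict containment [X_i,G] < [X_{i-1},G]. -/
open CategoryTheory

noncomputable section

/-- The kernel of the character of `V`: `{g | χ(g) = χ(1)}`. -/
def charKernel {G : Type} [Group G] (V : FDRep ℂ G) : Set G :=
  {g | V.character g = V.character 1}

/-- The center of the character of `V`: `{g | |χ(g)| = χ(1)}`. -/
def charCenter {G : Type} [Group G] (V : FDRep ℂ G) : Set G :=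
  {g | ((‖V.character g‖ : ℝ) : ℂ) = V.character 1}

/-- The degree `χ(1)` of the character of `V`. -/
def charDegree {G : Type} [Group G] (V : FDRep ℂ G) : ℕ :=
  Module.finrank ℂ V

/-- A group is nested if the centers of its irreducible characters form a chain. -/
def Nested (G : Type) [Group G] : Prop :=
  ∀ V W : FDRep ℂ G, Simple V → Simple W →
    charCenter V ⊆ charCenter W ∨ charCenter W ⊆ charCenter V

/-- `G = X 0 > X 1 > ⋯ > X n ≥ 1` is the chain of centers for `G`: the `X i` are the
distinct subgroups arising as centers of irreducible characters of `G`. -/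
def IsChainOfCenters {G : Type} [Group G] (n : ℕ) (X : ℕ → Subgroup G) : Prop :=
  X 0 = ⊤ ∧ (∀ i ≤ n, (X i).Normal) ∧ (∀ i < n, X (i + 1) < X i) ∧
    (∀ i ≤ n, ∃ V : FDRep ℂ G, Simple V ∧ charCenter V = (X i : Set G)) ∧
    (∀ V : FDRep ℂ G, Simple V → ∃ i ≤ n, charCenter V = (X i : Set G))

/-- `N` is a minimal normal subgroup of `H`. -/
def IsMinimalNormal {H : Type*} [Group H] (N : Subgroup H) : Prop :=
  N.Normal ∧ N ≠ ⊥ ∧ ∀ K : Subgroup H, K.Normal → K ≠ ⊥ → K ≤ N → K = N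

/-- An elementary abelian `p`-group: abelian with every element of order dividing `p`. -/
def IsElementaryAbelian (p : ℕ) (H : Type*) [Group H] : Prop :=
  (∀ a b : H, a * b = b * a) ∧ ∀ a : H, a ^ p = 1

/-!
Let `ρ` afford an irreducible character `χ` of `G` with `Z(χ) = X (i + 1)`. The eigenvalues of
`ρ g` are roots of unity, so `|χ(g)| = χ(1)` forces equality in the triangle inequality: all
eigenvalues coincide and, `ρ g` being semisimple, `ρ g` is scalar. By Schur's lemma `ρ g` is scalar
exactly when it commutes with `ρ G`, i.e. when `⁅g, G⁆ ≤ ker ρ`. Hence `⁅H, G⁆ ≤ ker ρ ↔ H ≤ Z(χ)`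
for every subgroup `H`: this holds for `H = X (i + 1)` and fails for `H = X i > X (i + 1)`.
-/

theorem Multiset.exists_eq_replicate_of_norm_sum_eq_card {E : Type*} [NormedAddCommGroup E]
    [NormedSpace ℝ E] [StrictConvexSpace ℝ E] {s : Multiset E} (hs : ∀ x ∈ s, ‖x‖ = 1)
    (h : ‖s.sum‖ = card s) : ∃ c, s = replicate (card s) c := by
  induction s using Multiset.induction_on with
  | empty => exact ⟨0, rfl⟩
  | cons a t ih =>
    have ha : ‖a‖ = 1 := hs a (mem_cons_self a t)
    have ht_le : ‖t.sum‖ ≤ card t := by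
      simpa [Multiset.map_congr rfl fun x hx => hs x (mem_cons_of_mem hx)] using
        norm_multiset_sum_le t
    rw [sum_cons, card_cons, Nat.cast_succ] at h
    have htri := norm_add_le a t.sum
    obtain ⟨c, hc⟩ := ih (fun x hx => hs x (mem_cons_of_mem hx)) (by linarith)
    rcases (card t).eq_zero_or_pos with ht0 | htpos
    · exact ⟨a, by simp [card_eq_zero.mp ht0]⟩
    have hray : SameRay ℝ a c := by
      have h' : SameRay ℝ a t.sum := sameRay_iff_norm_add.mpr (by linarith)
      rw [hc, sum_replicate, ← Nat.cast_smul_eq_nsmul ℝ] at h'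
      have hinv : (0 : ℝ) < ((card t : ℕ) : ℝ)⁻¹ := by positivity
      simpa [smul_smul, htpos.ne'] using h'.pos_smul_right hinv
    have hc1 : ‖c‖ = 1 := hs c (mem_cons_of_mem (hc ▸ mem_replicate.mpr ⟨htpos.ne', rfl⟩))
    obtain rfl : a = c := hray.eq_of_norm_eq (ha.trans hc1.symm)
    exact ⟨a, by rw [card_cons, replicate_succ, ← hc]⟩

namespace Module.End

open Polynomial

section Field

variable {K V : Type*} [Field K] [AddCommGroup V] [Module K V]

theorem isSemisimple_of_pow_eq_one {f : End K V} {m : ℕ} (hm : (m : K) ≠ 0) (hf : f ^ m = 1) :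
    f.IsSemisimple :=
  isSemisimple_of_squarefree_aeval_eq_zero (separable_X_pow_sub_C 1 hm one_ne_zero).squarefree
    (by simp [hf])

theorem HasEigenvalue.pow_eq_one_of_pow_eq_one {f : End K V} {μ : K} (hμ : f.HasEigenvalue μ)
    {m : ℕ} (hf : f ^ m = 1) : μ ^ m = 1 := by
  obtain ⟨v, hv⟩ := hμ.exists_hasEigenvector
  have h := hv.pow_apply m
  rw [hf, one_apply] at h
  exact smul_left_injective K hv.2 (by simpa using h.symm)

end Field

variable {V : Type*} [AddCommGroup V] [Module ℂ V] [FiniteDimensional ℂ V]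

theorem norm_trace_eq_finrank_iff {f : End ℂ V} {m : ℕ} (hm : m ≠ 0) (hf : f ^ m = 1) :
    ‖LinearMap.trace ℂ V f‖ = finrank ℂ V ↔ ∃ c : ℂ, f = algebraMap ℂ (End ℂ V) c := by
  constructor
  · intro htr
    have hcard : Multiset.card f.charpoly.roots = finrank ℂ V := by
      rw [IsAlgClosed.card_roots_eq_natDegree, LinearMap.charpoly_natDegree]
    have hunit : ∀ μ ∈ f.charpoly.roots, ‖μ‖ = 1 := fun μ hμ =>
      Complex.norm_eq_one_of_pow_eq_one (((hasEigenvalue_iff_isRoot_charpoly f μ).mpr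
        (isRoot_of_mem_roots hμ)).pow_eq_one_of_pow_eq_one hf) hm
    obtain ⟨c, hc⟩ := Multiset.exists_eq_replicate_of_norm_sum_eq_card hunit (by
      rw [← trace_eq_sum_roots_charpoly_of_splits (IsAlgClosed.splits _), htr, hcard])
    have hchar : f.charpoly = (X - C c) ^ finrank ℂ V := by
      rw [← prod_multiset_X_sub_C_of_monic_of_roots_card_eq f.charpoly_monic
        (by rw [hcard, LinearMap.charpoly_natDegree]), hc, hcard]
      simp
    have hnil : IsNilpotent (f - algebraMap ℂ _ c) :=
      ⟨finrank ℂ V, by simpa [hchar] using f.aeval_self_charpoly⟩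
    have hss : (f - algebraMap ℂ _ c).IsSemisimple :=
      isSemisimple_sub_algebraMap_iff.mpr (isSemisimple_of_pow_eq_one (by exact_mod_cast hm) hf)
    exact ⟨c, sub_eq_zero.mp (eq_zero_of_isNilpotent_isSemisimple hnil hss)⟩
  · rintro ⟨c, rfl⟩
    rw [Algebra.algebraMap_eq_smul_one, map_smul, LinearMap.trace_one, smul_eq_mul, norm_mul,
      Complex.norm_natCast]
    rcases subsingleton_or_nontrivial V with hV | hV
    · simp [finrank_zero_of_subsingleton]
    have hc : c ^ m = 1 := (algebraMap ℂ (End ℂ V)).injective (by simpa using hf)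
    rw [Complex.norm_eq_one_of_pow_eq_one hc hm, one_mul]

end Module.End

namespace MonoidHom

open scoped commutatorElement

variable {G M : Type*} [Group G] [Monoid M]

theorem commutatorElement_mem_ker_iff (f : G →* M) {g h : G} :
    ⁅g, h⁆ ∈ f.ker ↔ Commute (f g) (f h) := by
  rw [← ker_toHomUnits, mem_ker, map_commutatorElement, commutatorElement_eq_one_iff_commute,
    ← Commute.units_val_iff, coe_toHomUnits, coe_toHomUnits]

theorem commutator_top_le_ker_iff (f : G →* M) (H : Subgroup G) :
    ⁅H, ⊤⁆ ≤ f.ker ↔ ∀ g ∈ H, ∀ h, Commute (f g) (f h) := by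
  simp only [Subgroup.commutator_le, ← commutatorElement_mem_ker_iff, Subgroup.mem_top,
    forall_const]

end MonoidHom

namespace FDRep

variable {G : Type} [Group G]

theorem mem_charCenter_iff [Finite G] (V : FDRep ℂ G) {g : G} :
    g ∈ charCenter V ↔ ∃ c : ℂ, V.ρ g = algebraMap ℂ (Module.End ℂ V) c := by
  have hpow : V.ρ g ^ orderOf g = 1 := by rw [← map_pow, pow_orderOf_eq_one, map_one]
  rw [← Module.End.norm_trace_eq_finrank_iff (orderOf_pos g).ne' hpow, charCenter,
    Set.mem_ofPred_eq, char_one, ← Complex.ofReal_natCast, Complex.ofReal_inj]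
  rfl

theorem exists_eq_algebraMap_of_forall_commute (V : FDRep ℂ G) [Simple V] {g : G}
    (hg : ∀ h, Commute (V.ρ g) (V.ρ h)) : ∃ c : ℂ, V.ρ g = algebraMap ℂ (Module.End ℂ V) c := by
  let φ : V ⟶ V := ⟨InducedCategory.homMk (ModuleCat.ofHom (V.ρ g)), fun h => by
    ext1
    exact hg h⟩
  obtain ⟨c, hc⟩ := endomorphism_simple_eq_smul_id ℂ φ
  refine ⟨c, ?_⟩
  rw [Algebra.algebraMap_eq_smul_one]
  exact (congrArg (fun ψ : V ⟶ V => ψ.hom.hom.hom) hc).symm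

theorem mem_charCenter_iff_forall_commute [Finite G] (V : FDRep ℂ G) [Simple V] {g : G} :
    g ∈ charCenter V ↔ ∀ h, Commute (V.ρ g) (V.ρ h) := by
  refine ⟨fun hg h => ?_, fun hg =>
    (mem_charCenter_iff V).mpr (exists_eq_algebraMap_of_forall_commute V hg)⟩
  obtain ⟨c, hc⟩ := (mem_charCenter_iff V).mp hg
  rw [hc]
  exact Algebra.commute_algebraMap_left c _

theorem commutator_top_le_ker_iff [Finite G] (V : FDRep ℂ G) [Simple V] (H : Subgroup G) :
    ⁅H, ⊤⁆ ≤ V.ρ.ker ↔ (H : Set G) ⊆ charCenter V := by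
  simp only [MonoidHom.commutator_top_le_ker_iff, mem_charCenter_iff_forall_commute,
    Set.subset_def, SetLike.mem_coe]

end FDRep

/-- if `G` is nested with chain of centers `X 0 > ⋯ > X n`, then for every
`1 ≤ i ≤ n` one has the strict containment `⁅X i, G⁆ < ⁅X (i-1), G⁆`. -/
theorem commutators_strictly_decrease (G : Type) [Group G] [Fintype G]
    (n : ℕ) (X : ℕ → Subgroup G) (hX : IsChainOfCenters n X) :
    ∀ i < n, ⁅X (i + 1), (⊤ : Subgroup G)⁆ < ⁅X i, (⊤ : Subgroup G)⁆ := by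
  obtain ⟨-, -, hlt, hcenter, -⟩ := hX
  intro i hi
  obtain ⟨V, hV, hVX⟩ := hcenter (i + 1) (by omega)
  have hker : ⁅X (i + 1), ⊤⁆ ≤ V.ρ.ker := (FDRep.commutator_top_le_ker_iff V _).mpr hVX.superset
  refine (Subgroup.commutator_mono (hlt i hi).le le_rfl).lt_of_ne fun heq => (hlt i hi).not_ge ?_
  have hXi := (FDRep.commutator_top_le_ker_iff V (X i)).mp (heq ▸ hker)
  exact SetLike.coe_subset_coe.mp (hVX ▸ hXi)
end
end

section
/- Let G be a finite nested group with chain of centers G = X_0 > X_1 > ⋯ > X_n ≥ 1. Then G is nilpotent if and only if [X_{i-1},G] ≤ X_i for all i with 1 ≤ i ≤ n. -/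
open CategoryTheory

noncomputable section

/-!
For an irreducible representation `ρ` with character `χ`, `Z(χ)` is the set of `g` with `ρ g`
scalar: `ρ g` has finite order, so its eigenvalues are roots of unity, and `|χ g| = χ 1` forces
them to coincide. By Schur's lemma, `Z(χ) / ker χ` is therefore the center of `G / ker χ`.
Moreover, an element outside a normal subgroup `M` acts nontrivially on some irreducible
constituent of the permutation representation on `G ⧸ M`, so `M` is the intersection of the
kernels containing it.

In particular `X n`, contained in every `Z(χ)`, is central, so under the commutator condition
`X 0 ≥ ⋯ ≥ X n ≥ 1` is a central series. If `G` is nilpotent and `i < n`, the preimage `Y` of the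
center of `G ⧸ X (i + 1)` strictly contains `X (i + 1)`. Every irreducible `χ` with
`X (i + 1) ≤ ker χ` has `Y ≤ Z(χ) = X j`, so `j ≤ i` and `X i ≤ Z(χ)`, i.e.
`⁅X i, G⁆ ≤ ker χ`; intersecting these kernels gives `⁅X i, G⁆ ≤ X (i + 1)`.
-/

open scoped commutatorElement MonoidAlgebra

theorem Multiset.eq_of_norm_sum_eq_card {E : Type*} [NormedAddCommGroup E] [NormedSpace ℝ E]
    [StrictConvexSpace ℝ E] {s : Multiset E} (hs : ∀ x ∈ s, ‖x‖ = 1)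
    (hsum : ‖s.sum‖ = Multiset.card s) {x y : E} (hx : x ∈ s) (hy : y ∈ s) : x = y := by
  by_cases hxy : x = y
  · exact hxy
  obtain ⟨s', rfl⟩ := Multiset.exists_cons_of_mem hx
  obtain ⟨t, rfl⟩ :=
    Multiset.exists_cons_of_mem ((Multiset.mem_cons.1 hy).resolve_left (Ne.symm hxy))
  have hx1 : ‖x‖ = 1 := hs x (by simp)
  have hy1 : ‖y‖ = 1 := hs y (by simp)
  have ht : ‖t.sum‖ ≤ Multiset.card t := by
    refine (norm_multiset_sum_le t).trans (le_of_eq ?_)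
    rw [Multiset.map_congr rfl fun z hz => hs z (by simp [hz]), Multiset.map_const',
      Multiset.sum_replicate, nsmul_one]
  have hxy_norm : ‖x + y‖ = ‖x‖ + ‖y‖ := by
    refine le_antisymm (norm_add_le x y) ?_
    have := norm_add_le (x + y) t.sum
    simp only [Multiset.sum_cons, Multiset.card_cons, ← add_assoc] at hsum
    push_cast at hsum
    linarith
  exact (sameRay_iff_norm_add.2 hxy_norm).eq_of_norm_eq (hx1.trans hy1.symm)

theorem Module.End.eq_one_of_hasEigenvalue_one {K V : Type*} [Field K] [AddCommGroup V]
    [Module K V] {μ : K} (h : (1 : Module.End K V).HasEigenvalue μ) : μ = 1 := by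
  obtain ⟨v, hv⟩ := h.exists_hasEigenvector
  exact (smul_left_injective K hv.2 (by simpa using hv.apply_eq_smul)).symm

open Polynomial in
theorem Module.End.exists_eq_algebraMap_of_pow_eq_one {V : Type*} [AddCommGroup V] [Module ℂ V]
    [FiniteDimensional ℂ V] {f : Module.End ℂ V} {N : ℕ} (hN : N ≠ 0) (hf : f ^ N = 1)
    (htr : ‖LinearMap.trace ℂ V f‖ = Module.finrank ℂ V) : ∃ c : ℂ, f = algebraMap ℂ _ c := by
  have hsplit : f.charpoly.Splits := IsAlgClosed.splits _
  have hcard : Multiset.card f.charpoly.roots = Module.finrank ℂ V :=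
    (splits_iff_card_roots.1 hsplit).trans (LinearMap.charpoly_natDegree f)
  have hunit : ∀ μ ∈ f.charpoly.roots, ‖μ‖ = 1 := by
    intro μ hμ
    have hμ : f.HasEigenvalue μ :=
      (hasEigenvalue_iff_isRoot_charpoly f μ).2 (isRoot_of_mem_roots hμ)
    have := hμ.pow N
    rw [hf] at this
    exact Complex.norm_eq_one_of_pow_eq_one (eq_one_of_hasEigenvalue_one this) hN
  -- The eigenvalues are unit complex numbers whose sum has the largest possible norm.
  obtain ⟨c, hc⟩ : ∃ c, ∀ μ ∈ f.charpoly.roots, μ = c := by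
    rcases Multiset.empty_or_exists_mem f.charpoly.roots with h | ⟨c, hc⟩
    · exact ⟨0, by simp [h]⟩
    · refine ⟨c, fun μ hμ => Multiset.eq_of_norm_sum_eq_card hunit ?_ hμ hc⟩
      rw [← trace_eq_sum_roots_charpoly_of_splits hsplit, htr, hcard]
  have hcharpoly : f.charpoly = (X - C c) ^ Module.finrank ℂ V := by
    rw [hsplit.eq_prod_roots_of_monic (LinearMap.charpoly_monic f),
      Multiset.eq_replicate_card.2 hc, Multiset.map_replicate, Multiset.prod_replicate, hcard]
  have hnil : IsNilpotent (f - algebraMap ℂ _ c) :=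
    ⟨Module.finrank ℂ V, by simpa [hcharpoly] using LinearMap.aeval_self_charpoly f⟩
  have hss : f.IsSemisimple := by
    refine isSemisimple_of_squarefree_aeval_eq_zero (p := X ^ N - 1) ?_ (by simp [hf])
    simpa using (separable_X_pow_sub_C (1 : ℂ) (by exact_mod_cast hN) one_ne_zero).squarefree
  exact ⟨c, sub_eq_zero.1 (eq_zero_of_isNilpotent_isSemisimple hnil
    (isSemisimple_sub_algebraMap_iff.2 hss))⟩

theorem MonoidHom.map_commutatorElement_eq_one_iff {G M : Type*} [Group G] [Monoid M]
    (f : G →* M) (g h : G) : f ⁅g, h⁆ = 1 ↔ Commute (f g) (f h) := by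
  rw [← Units.val_one, ← f.coe_toHomUnits, map_commutatorElement, Units.val_inj,
    commutatorElement_eq_one_iff_commute, ← Commute.units_val_iff]
  rfl

theorem IsSemisimpleModule.exists_isSimpleModule_smul_ne {R N : Type*} [Ring R] [AddCommGroup N]
    [Module R N] [IsSemisimpleModule R N] (r : R) {x : N} (hx : r • x ≠ x) :
    ∃ S : Submodule R N, IsSimpleModule R S ∧ ∃ y ∈ S, r • y ≠ y := by
  by_contra! h
  apply hx
  have hmem : x ∈ sSup {S : Submodule R N | IsSimpleModule R S} := by
    rw [sSup_simples_eq_top]; trivial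
  rw [sSup_eq_iSup'] at hmem
  refine Submodule.iSup_induction _ (motive := fun y => r • y = y) hmem ?_ (smul_zero r) ?_
  · exact fun S y hy => h S.1 S.2 y hy
  · intro y z hy hz
    rw [smul_add, hy, hz]

namespace Representation

variable {k G W : Type*} [Field k] [AddCommGroup W] [Module k W]

theorem isIrreducible_toRepresentation_ofSubmodule' [Monoid G] {ρ : Representation k G W}
    (S : Submodule k[G] ρ.asModule) [IsSimpleModule k[G] S] :
    (Subrepresentation.ofSubmodule' S).toRepresentation.IsIrreducible := by
  set σ := Subrepresentation.ofSubmodule' S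
  rw [irreducible_iff_isSimpleModule_asModule]
  refine IsSimpleModule.congr
    (show σ.toRepresentation.asModule ≃ₗ[k[G]] S from
      { toFun := fun v => ⟨v.1, v.2⟩
        invFun := fun v => ⟨v.1, v.2⟩
        map_add' := fun _ _ => rfl
        map_smul' := fun r v => Subtype.ext ?_
        left_inv := fun _ => rfl
        right_inv := fun _ => rfl })
  change ((σ.toRepresentation.asAlgebraHom r v : σ.toSubmodule) : W) = ρ.asAlgebraHom r v.1
  induction r using MonoidAlgebra.induction_linear with
  | zero => rfl
  | add r s hr hs => rw [map_add, map_add, LinearMap.add_apply, ← hr, ← hs]; rfl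
  | single g a => simp only [asAlgebraHom_single]; rfl

theorem exists_isIrreducible_subrepresentation_apply_ne [Group G] [Finite G]
    [NeZero (Nat.card G : k)] (ρ : Representation k G W) {g : G} {v : W} (hv : ρ g v ≠ v) :
    ∃ σ : Subrepresentation ρ, σ.toRepresentation.IsIrreducible ∧ ∃ w ∈ σ, ρ g w ≠ w := by
  obtain ⟨S, hS, w, hwS, hw⟩ := IsSemisimpleModule.exists_isSimpleModule_smul_ne
    (MonoidAlgebra.single g (1 : k)) (x := ρ.asModuleEquiv.symm v)
    (by rw [single_smul, one_smul]; exact hv)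
  refine ⟨_, isIrreducible_toRepresentation_ofSubmodule' S, w, hwS, fun h => hw ?_⟩
  rw [single_smul, one_smul]
  exact h

end Representation

theorem FDRep.simple_of_isIrreducible {k G V : Type} [Field k] [IsAlgClosed k] [Group G]
    [Finite G] [NeZero (Nat.card G : k)] [AddCommGroup V] [Module k V] [FiniteDimensional k V]
    (ρ : Representation k G V) [ρ.IsIrreducible] : Simple (FDRep.of ρ) := by
  rw [FDRep.simple_iff_end_is_rank_one,
    ← Representation.IsIrreducible.finrank_intertwiningMap_self ρ]
  exact ((FDRep.forget₂HomLinearEquiv _ _).symm ≪≫ₗ Rep.homLinearEquiv _ _).finrank_eq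

section CharacterCenters

variable {G : Type} [Group G]

theorem mem_of_forall_simple_ρ_eq_one [Finite G] (M : Subgroup G) [M.Normal] {g : G}
    (hg : ∀ (V : FDRep ℂ G) [Simple V], (∀ m ∈ M, V.ρ m = 1) → V.ρ g = 1) : g ∈ M := by
  by_contra hgM
  let ρ : Representation ℂ G ℂ[G ⧸ M] :=
    (Representation.leftRegular ℂ (G ⧸ M)).comp (QuotientGroup.mk' M)
  have hρg : ρ g (MonoidAlgebra.single 1 1) ≠ MonoidAlgebra.single 1 1 := by
    simpa [ρ, Representation.ofMulAction_single, MonoidAlgebra.single_left_inj,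
      QuotientGroup.eq_one_iff] using hgM
  obtain ⟨σ, hσ, w, hwσ, hw⟩ :=
    Representation.exists_isIrreducible_subrepresentation_apply_ne ρ hρg
  have := FDRep.simple_of_isIrreducible σ.toRepresentation
  have hσg := hg (FDRep.of σ.toRepresentation) fun m hm => by
    refine LinearMap.ext fun u => Subtype.ext ?_
    change ρ m u = u
    simp [ρ, (QuotientGroup.eq_one_iff m).2 hm]
  exact hw congr(($hσg ⟨w, hwσ⟩ : ℂ[G ⧸ M]))

theorem mem_charCenter_iff_exists_eq_algebraMap [Finite G] (V : FDRep ℂ G) {g : G} :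
    g ∈ charCenter V ↔ ∃ c : ℂ, V.ρ g = algebraMap ℂ _ c := by
  have hcard : Nat.card G ≠ 0 := Nat.card_pos.ne'
  have hpow : V.ρ g ^ Nat.card G = 1 := by rw [← map_pow, pow_card_eq_one', map_one]
  constructor
  · intro hg
    refine Module.End.exists_eq_algebraMap_of_pow_eq_one hcard hpow ?_
    have : ((‖V.character g‖ : ℝ) : ℂ) = Module.finrank ℂ V := by rw [hg, FDRep.char_one]
    exact_mod_cast this
  · rintro ⟨c, hc⟩
    have hchar : V.character g = c * Module.finrank ℂ V := by
      rw [FDRep.character, hc, Algebra.algebraMap_eq_smul_one, map_smul, LinearMap.trace_one,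
        smul_eq_mul]
    change ((‖V.character g‖ : ℝ) : ℂ) = V.character 1
    rw [FDRep.char_one, hchar, norm_mul, Complex.norm_natCast]
    rcases subsingleton_or_nontrivial V with hV | hV
    · simp [Module.finrank_zero_of_subsingleton]
    · have : c ^ Nat.card G = 1 := by
        apply (algebraMap ℂ (Module.End ℂ V)).injective
        rw [map_pow, ← hc, hpow, map_one]
      simp [Complex.norm_eq_one_of_pow_eq_one this hcard]

theorem FDRep.exists_eq_algebraMap_of_forall_commute_s10 (V : FDRep ℂ G) [Simple V] {g : G}
    (hg : ∀ h, Commute (V.ρ g) (V.ρ h)) : ∃ c : ℂ, V.ρ g = algebraMap ℂ _ c := by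
  let φ : V ⟶ V :=
    ⟨FGModuleCat.ofHom (V.ρ g), fun h => by ext x; exact LinearMap.congr_fun (hg h) x⟩
  obtain ⟨c, hc⟩ := endomorphism_simple_eq_smul_id ℂ φ
  refine ⟨c, ?_⟩
  rw [Algebra.algebraMap_eq_smul_one]
  have := congrArg Action.Hom.hom hc
  rw [Action.smul_hom] at this
  exact (congrArg (fun f => f.hom.hom) this).symm

theorem mem_charCenter_iff [Finite G] (V : FDRep ℂ G) [Simple V] {g : G} :
    g ∈ charCenter V ↔ ∀ h, V.ρ ⁅g, h⁆ = 1 := by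
  simp only [V.ρ.map_commutatorElement_eq_one_iff, mem_charCenter_iff_exists_eq_algebraMap]
  refine ⟨?_, FDRep.exists_eq_algebraMap_of_forall_commute_s10 V⟩
  rintro ⟨c, hc⟩ h
  rw [hc]
  exact Algebra.commutes c _

theorem commutatorElement_mem_of_forall_mem_charCenter [Finite G] (M : Subgroup G) [M.Normal]
    {x : G} (hx : ∀ (V : FDRep ℂ G) [Simple V], (∀ m ∈ M, V.ρ m = 1) → x ∈ charCenter V)
    (g : G) : ⁅x, g⁆ ∈ M :=
  mem_of_forall_simple_ρ_eq_one M fun V _ hVM => (mem_charCenter_iff V).1 (hx V hVM) g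

end CharacterCenters

theorem Subgroup.lt_upperCentralSeriesStep {G : Type*} [Group G] [Group.IsNilpotent G]
    (N : Subgroup G) [N.Normal] (hN : N ≠ ⊤) : N < upperCentralSeriesStep N := by
  have : Nontrivial (G ⧸ N) := QuotientGroup.nontrivial_iff.2 hN
  rw [upperCentralSeriesStep_eq_comap_center]
  conv_lhs => rw [← QuotientGroup.ker_mk' N, ← MonoidHom.comap_bot]
  exact (Subgroup.comap_lt_comap_of_surjective (QuotientGroup.mk'_surjective N)).2
    (bot_lt_iff_ne_bot.2 (Group.IsNilpotent.center_ne_bot (G ⧸ N)))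

namespace IsChainOfCenters

variable {G : Type} [Group G] {n : ℕ} {X : ℕ → Subgroup G}

theorem antitone (hX : IsChainOfCenters n X) {i j : ℕ} (hij : i ≤ j) (hj : j ≤ n) :
    X j ≤ X i := by
  induction j, hij using Nat.le_induction with
  | base => exact le_rfl
  | succ j hij ih => exact (hX.2.2.1 j hj).le.trans (ih (by omega))

theorem le_of_not_le_succ (hX : IsChainOfCenters n X) {i j : ℕ} (hi : i < n) (hj : j ≤ n)
    (h : ¬X j ≤ X (i + 1)) : X i ≤ X j :=
  hX.antitone (not_lt.1 fun hij => h (hX.antitone hij hj)) hi.le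

theorem commutator_last_eq_bot [Finite G] (hX : IsChainOfCenters n X) :
    ⁅X n, (⊤ : Subgroup G)⁆ = ⊥ := by
  rw [eq_bot_iff, Subgroup.commutator_le]
  rintro x hx g -
  refine commutatorElement_mem_of_forall_mem_charCenter ⊥ (fun V _ _ => ?_) g
  obtain ⟨j, hj, hVj⟩ := hX.2.2.2.2 V ‹_›
  exact hVj ▸ hX.antitone hj le_rfl hx

theorem commutator_le_succ [Finite G] [Group.IsNilpotent G] (hX : IsChainOfCenters n X) {i : ℕ}
    (hi : i < n) : ⁅X i, (⊤ : Subgroup G)⁆ ≤ X (i + 1) := by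
  have := hX.2.1 (i + 1) hi
  have hY := (X (i + 1)).lt_upperCentralSeriesStep ((hX.2.2.1 i hi).trans_le le_top).ne
  rw [Subgroup.commutator_le]
  rintro x hx g -
  refine commutatorElement_mem_of_forall_mem_charCenter (X (i + 1)) (fun V _ hVX => ?_) g
  obtain ⟨j, hj, hVj⟩ := hX.2.2.2.2 V ‹_›
  have hYV : Subgroup.upperCentralSeriesStep (X (i + 1)) ≤ X j := fun y hy =>
    show y ∈ (X j : Set G) from hVj ▸ (mem_charCenter_iff V).2 fun h => hVX _ (hy h)
  exact hVj ▸ hX.le_of_not_le_succ hi hj (fun h => hY.not_ge (hYV.trans h)) hx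

end IsChainOfCenters

/-- a nested group `G` with chain of centers `X 0 > ⋯ > X n` is nilpotent iff
`⁅X (i-1), G⁆ ≤ X i` for all `1 ≤ i ≤ n`. -/
theorem nilpotent_iff_central_chain (G : Type) [Group G] [Fintype G]
    (n : ℕ) (X : ℕ → Subgroup G) (hX : IsChainOfCenters n X) :
    Group.IsNilpotent G ↔ ∀ i < n, ⁅X i, (⊤ : Subgroup G)⁆ ≤ X (i + 1) := by
  refine ⟨fun _ i hi => hX.commutator_le_succ hi, fun h => ?_⟩
  rw [Subgroup.nilpotent_iff_finite_descending_central_series]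
  refine ⟨n + 1, fun i => if i ≤ n then X i else ⊥, ⟨by simp [hX.1], fun x i hx g => ?_⟩, by simp⟩
  have hstep : ⁅(if i ≤ n then X i else ⊥), (⊤ : Subgroup G)⁆ ≤
      if i + 1 ≤ n then X (i + 1) else ⊥ := by
    rcases lt_trichotomy i n with hi | rfl | hi
    · simpa [hi.le, Nat.succ_le_of_lt hi] using h i hi
    · simp [hX.commutator_last_eq_bot]
    · simp [hi.not_ge, (Nat.lt_succ_of_lt hi).not_ge]
  exact hstep (Subgroup.commutator_mem_commutator hx (Subgroup.mem_top g))
end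
end
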